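/- Let α be an a-cone arc in a noncomplete metric space D with endpoints x and y, let z₀ bisect the arclength of α, and let z₁, z₂ ∈ α[x,z₀] with z₂ between z₁ and z₀. Then d_D(z₂) ≥ (1/(4a))·(2ℓ(α[z₁,z₂]) + d_D(z₁)). -/

import Mathlib

open Set Metric

noncomputable section

variable {D : Type*} [MetricSpace D]

/-- Distance from a point to the metric boundary `∂D = D̄ \ D`. -/
def dB (x : D) : ℝ :=
  Metric.infDist (x : UniformSpace.Completion D)
    ((Set.range ((↑) : D → UniformSpace.Completion D))ᶜ)

/-- A rectifiable curve from `x` to `y`, given in (1-Lipschitz) arclength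
parametrization on `[0, L]`; `L` is its length. -/
structure Curve (D : Type*) [MetricSpace D] (x y : D) where
  L : ℝ
  hL : 0 ≤ L
  γ : ℝ → D
  lip : LipschitzOnWith 1 γ (Set.Icc 0 L)
  h0 : γ 0 = x
  h1 : γ L = y

/-- Quasihyperbolic length of the subarc with parameters in `[s,t]`. -/
def Curve.qhLenOn {x y : D} (c : Curve D x y) (s t : ℝ) : ℝ :=
  ∫ u in s..t, 1 / dB (c.γ u)

/-- Quasihyperbolic length of a curve. -/
def Curve.qhLen {x y : D} (c : Curve D x y) : ℝ := c.qhLenOn 0 c.L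

/-- The quasihyperbolic distance: infimum of quasihyperbolic lengths of curves. -/
def qhDist (x y : D) : ℝ := sInf {r : ℝ | ∃ c : Curve D x y, r = c.qhLen}

/-- Every pair of points is joined by a rectifiable curve. -/
def RectConnected (D : Type*) [MetricSpace D] : Prop :=
  ∀ x y : D, Nonempty (Curve D x y)

/-- A length space: distance is the infimum of lengths of joining curves. -/
def IsLengthSpace (D : Type*) [MetricSpace D] : Prop :=
  ∀ x y : D, ∀ ε > 0, ∃ c : Curve D x y, c.L ≤ dist x y + ε

/-- A quasihyperbolic geodesic. -/
def Curve.IsQHGeodesic {x y : D} (c : Curve D x y) : Prop :=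
  ∀ s t : ℝ, s ∈ Set.Icc 0 c.L → t ∈ Set.Icc 0 c.L → s ≤ t →
    c.qhLenOn s t = qhDist (c.γ s) (c.γ t)

/-- An `a`-cone arc: `min{ℓ(α[x,z]), ℓ(α[z,y])} ≤ a·d_D(z)` for all `z` on the arc. -/
def Curve.IsConeArc {x y : D} (c : Curve D x y) (a : ℝ) : Prop :=
  ∀ t ∈ Set.Icc 0 c.L, min t (c.L - t) ≤ a * dB (c.γ t)

/-- A `(λ,μ)`-quasigeodesic with respect to the quasihyperbolic metric. -/
def Curve.IsQuasigeodesic {x y : D} (c : Curve D x y) (lam mu : ℝ) : Prop :=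
  ∀ s t : ℝ, s ∈ Set.Icc 0 c.L → t ∈ Set.Icc 0 c.L → s ≤ t →
    c.qhLenOn s t ≤ lam * qhDist (c.γ s) (c.γ t) + mu

/-- An `a`-John space. -/
def IsJohn (D : Type*) [MetricSpace D] (a : ℝ) : Prop :=
  ∀ x y : D, ∃ c : Curve D x y, c.IsConeArc a

/-- A `c`-uniform space. -/
def IsUniform (D : Type*) [MetricSpace D] (c : ℝ) : Prop :=
  ∀ x y : D, ∃ α : Curve D x y, α.L ≤ c * dist x y ∧ α.IsConeArc c

/-- Gromov product with respect to the quasihyperbolic metric. -/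
def gromovProd (x y w : D) : ℝ := (qhDist x w + qhDist y w - qhDist x y) / 2

/-- `(D,k)` is Gromov `δ`-hyperbolic (four-point condition). -/
def QHHyperbolic (D : Type*) [MetricSpace D] (δ : ℝ) : Prop :=
  ∀ x y z w : D, min (gromovProd x y w) (gromovProd y z w) - δ ≤ gromovProd x z w

/-- `(D,k)` is `K`-roughly starlike with respect to `w`. -/
def RoughlyStarlike (D : Type*) [MetricSpace D] (K : ℝ) (w : D) : Prop :=
  ∀ x : D, ∃ γ : ℝ → D, γ 0 = w ∧
    (∀ s t : ℝ, 0 ≤ s → 0 ≤ t → qhDist (γ s) (γ t) = |s - t|) ∧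
    ∃ t : ℝ, 0 ≤ t ∧ qhDist x (γ t) ≤ K

/-- The `h`-coarse quasihyperbolic length of the part of the curve `β` with
parameters in `[s,t]`. -/
def coarseLen {E : Type*} [MetricSpace E] (β : ℝ → E) (s t h : ℝ) : ℝ :=
  sSup {r : ℝ | ∃ n : ℕ, ∃ u : Fin (n + 1) → ℝ, Monotone u ∧
    (∀ i, u i ∈ Set.Icc s t) ∧
    (∀ i : Fin n, h ≤ qhDist (β (u i.castSucc)) (β (u i.succ))) ∧
    r = ∑ i : Fin n, qhDist (β (u i.castSucc)) (β (u i.succ))}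

/-- `λ`-annular quasiconvexity. -/
def AnnularQuasiconvex (X : Type*) [MetricSpace X] (lam : ℝ) : Prop :=
  ∀ (x : X) (r r' : ℝ), 0 < r' → r' < r →
    ∀ y z : X, y ∈ Metric.ball x r \ Metric.ball x r' →
      z ∈ Metric.ball x r \ Metric.ball x r' →
      ∃ c : Curve X y z, c.L ≤ lam * dist y z ∧
        ∀ t ∈ Set.Icc 0 c.L, c.γ t ∈ Metric.ball x (lam * r) \ Metric.ball x (r' / lam)

end

section

variable {D : Type*} [MetricSpace D]

theorem dB_nonneg (z : D) : 0 ≤ dB z := infDist_nonneg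

theorem dB_le_dB_add_dist (z w : D) : dB z ≤ dB w + dist z w := by
  unfold dB
  rw [← UniformSpace.Completion.dist_eq z w]
  exact infDist_le_infDist_add_dist

theorem Curve.dist_γ_le_sub {x y : D} (c : Curve D x y) {s t : ℝ}
    (hs : s ∈ Icc 0 c.L) (ht : t ∈ Icc 0 c.L) (hst : s ≤ t) :
    dist (c.γ s) (c.γ t) ≤ t - s := by
  simpa [Real.dist_eq, abs_of_nonpos (sub_nonpos.2 hst)] using c.lip.dist_le_mul s hs t ht

theorem Curve.IsConeArc.le_mul_dB_of_le_half {x y : D} {c : Curve D x y} {a : ℝ}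
    (hc : c.IsConeArc a) {t : ℝ} (ht : t ∈ Icc 0 (c.L / 2)) :
    t ≤ a * dB (c.γ t) := by
  have htL : t ∈ Icc 0 c.L := ⟨ht.1, ht.2.trans (by linarith [c.hL])⟩
  simpa [min_eq_left (show t ≤ c.L - t by linarith [ht.2])] using hc t htL

end

theorem stmt6_general {D : Type*} [MetricSpace D]
    (a : ℝ) (ha : 1 ≤ a) (x y : D) (α : Curve D x y) (hcone : α.IsConeArc a)
    (s t : ℝ) (hs : s ∈ Set.Icc 0 (α.L / 2)) (ht : t ∈ Set.Icc s (α.L / 2)) :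
    1 / (4 * a) * (2 * (t - s) + dB (α.γ s)) ≤ dB (α.γ t) := by
  have ht_half : t ∈ Icc 0 (α.L / 2) := ⟨hs.1.trans ht.1, ht.2⟩
  have hsL : s ∈ Icc 0 α.L := ⟨hs.1, hs.2.trans (by linarith [α.hL])⟩
  have htL : t ∈ Icc 0 α.L := ⟨ht_half.1, ht_half.2.trans (by linarith [α.hL])⟩
  have hlip : dB (α.γ s) ≤ dB (α.γ t) + (t - s) :=
    (dB_le_dB_add_dist _ _).trans (by gcongr; exact α.dist_γ_le_sub hsL htL ht.1)
  have hcone_t : t ≤ a * dB (α.γ t) := hcone.le_mul_dB_of_le_half ht_half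
  have hdB_le : dB (α.γ t) ≤ a * dB (α.γ t) := le_mul_of_one_le_left (dB_nonneg _) ha
  -- `2(t-s) + d(z₁) ≤ 3t + d(z₂) ≤ 3a d(z₂) + a d(z₂)`
  rw [div_mul_eq_mul_div, one_mul, div_le_iff₀ (by linarith)]
  linarith [hs.1]

/-- on the first half of an `a`-cone arc,
`d_D(z₂) ≥ (1/(4a))(2ℓ(α[z₁,z₂]) + d_D(z₁))`. -/
theorem stmt6 {D : Type*} [MetricSpace D] (hnc : ¬ CompleteSpace D)
    (a : ℝ) (ha : 1 ≤ a) (x y : D) (α : Curve D x y) (hcone : α.IsConeArc a)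
    (s t : ℝ) (hs : s ∈ Set.Icc 0 (α.L / 2)) (ht : t ∈ Set.Icc s (α.L / 2)) :
    1 / (4 * a) * (2 * (t - s) + dB (α.γ s)) ≤ dB (α.γ t) :=
  stmt6_general a ha x y α hcone s t hs ht
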